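/- arXiv:2406.11113 — 2 statements merged into one kernel-verified Lean document; each statement's English description precedes it below -/
import Mathlib

section
/- A Toeplitz matrix A = T_n⟨S; T⟩ is walk-ensured if and only if there exists a positive integer M such that P_i(A) = R_i(A) for every integer i ≥ M. -/
/-- gcd of all sums `s + t` with `s ∈ S`, `t ∈ T`. -/
def sumGcd (S T : Finset ℕ) : ℕ := (S ×ˢ T).gcd (fun p => p.1 + p.2)

/-- gcd of all elements of `S ∪ T`. -/
def unionGcd (S T : Finset ℕ) : ℕ := (S ∪ T).gcd id

/-- Arc of the Toeplitz digraph `D(T_n⟨S;T⟩)` on vertex set `{1,…,n}`. -/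
def arc (n : ℕ) (S T : Finset ℕ) (u v : ℕ) : Prop :=
  u ∈ Finset.Icc 1 n ∧ v ∈ Finset.Icc 1 n ∧
    ((∃ s ∈ S, (v : ℤ) - u = s) ∨ (∃ t ∈ T, (u : ℤ) - v = t))

/-- There is a directed walk of length `m` from `u` to `v` in `D(T_n⟨S;T⟩)`. -/
def hasWalk (n : ℕ) (S T : Finset ℕ) (u v m : ℕ) : Prop :=
  ∃ f : ℕ → ℕ, f 0 = u ∧ f m = v ∧ ∀ i < m, arc n S T (f i) (f (i + 1))

/-- `ℓ ∈ P_i(A)` for `A = T_n⟨S;T⟩`, where `dplus = gcd(S+T)` and `s1 = min S`. -/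
def Pset (n dplus s1 : ℕ) (i : ℕ) (ℓ : ℤ) : Prop :=
  -(n : ℤ) < ℓ ∧ ℓ < n ∧ ℓ ≡ (i : ℤ) * s1 [ZMOD (dplus : ℤ)]

/-- `ℓ ∈ Q_i(A)` for `A = T_n⟨S;T⟩`. -/
def Qset (n : ℕ) (S T : Finset ℕ) (i : ℕ) (ℓ : ℤ) : Prop :=
  -(n : ℤ) < ℓ ∧ ℓ < n ∧ ∃ a b : ℕ → ℕ,
    ((∑ s ∈ S, (a s : ℤ) * s) - ∑ t ∈ T, (b t : ℤ) * t) = ℓ ∧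
    ((∑ s ∈ S, a s) + ∑ t ∈ T, b t) = i

/-- `ℓ ∈ R_i(A)` for `A = T_n⟨S;T⟩`. -/
def Rset (n : ℕ) (S T : Finset ℕ) (i : ℕ) (ℓ : ℤ) : Prop :=
  -(n : ℤ) < ℓ ∧ ℓ < n ∧ ∀ u ∈ Finset.Icc 1 n, ∀ v ∈ Finset.Icc 1 n,
    (v : ℤ) - u = ℓ → hasWalk n S T u v i

/-- `T_n⟨S;T⟩` is walk-ensured (with `s1 = min S`). -/
def walkEnsured (n : ℕ) (S T : Finset ℕ) (s1 : ℕ) : Prop :=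
  ∃ M : ℕ, 0 < M ∧ ∀ u ∈ Finset.Icc 1 n, ∀ v ∈ Finset.Icc 1 n, ∀ ℓ : ℕ, M ≤ ℓ →
    ((v : ℤ) - u ≡ (ℓ : ℤ) * s1 [ZMOD ((sumGcd S T : ℕ) : ℤ)]) → hasWalk n S T u v ℓ

/-!
Every arc of `D(T_n⟨S;T⟩)` moves a vertex by some `s ∈ S` or by some `-t` with `t ∈ T`, and both
are congruent to `s1 = min S` modulo `d⁺ = gcd(S + T)`; so a walk of length `i` from `u` to `v`
forces `v - u ≡ i s1 (mod d⁺)`. As every `ℓ ∈ I_n` is a difference `v - u` of vertices, this gives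
`R_i ⊆ P_i`, and the reverse inclusion for all large `i` is then literally walk-ensuredness.
-/

section Toeplitz

variable {n : ℕ} {S T : Finset ℕ}

lemma sumGcd_dvd_add {s t : ℕ} (hs : s ∈ S) (ht : t ∈ T) : (sumGcd S T : ℤ) ∣ s + t := by
  have h : sumGcd S T ∣ s + t :=
    Finset.gcd_dvd (f := fun p : ℕ × ℕ => p.1 + p.2)
      (Finset.mem_product.mpr ⟨hs, ht⟩ : (s, t) ∈ S ×ˢ T)
  exact_mod_cast h

lemma modEq_sumGcd_of_mem (hT : T.Nonempty) {s s' : ℕ} (hs : s ∈ S) (hs' : s' ∈ S) :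
    (s : ℤ) ≡ s' [ZMOD sumGcd S T] := by
  obtain ⟨t, ht⟩ := hT
  exact ((Int.modEq_zero_iff_dvd.2 (sumGcd_dvd_add hs ht)).trans
    (Int.modEq_zero_iff_dvd.2 (sumGcd_dvd_add hs' ht)).symm).add_right_cancel' t

lemma neg_modEq_sumGcd_of_mem {s t : ℕ} (hs : s ∈ S) (ht : t ∈ T) :
    -(t : ℤ) ≡ s [ZMOD sumGcd S T] :=
  Int.modEq_iff_dvd.2 (by simpa only [sub_neg_eq_add] using sumGcd_dvd_add hs ht)

lemma arc.sub_modEq (hT : T.Nonempty) {s1 u v : ℕ} (hs1 : s1 ∈ S) (h : arc n S T u v) :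
    (v : ℤ) - u ≡ s1 [ZMOD sumGcd S T] := by
  obtain ⟨-, -, ⟨s, hs, hvu⟩ | ⟨t, ht, huv⟩⟩ := h
  · exact hvu ▸ modEq_sumGcd_of_mem hT hs hs1
  · exact (show (v : ℤ) - u = -t by omega) ▸ neg_modEq_sumGcd_of_mem hs1 ht

lemma hasWalk.sub_modEq (hT : T.Nonempty) {s1 u v m : ℕ} (hs1 : s1 ∈ S)
    (h : hasWalk n S T u v m) : (v : ℤ) - u ≡ m * s1 [ZMOD sumGcd S T] := by
  induction m generalizing v with
  | zero =>
    obtain ⟨f, rfl, rfl, -⟩ := h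
    simp
  | succ m ih =>
    obtain ⟨f, rfl, rfl, hf⟩ := h
    have hprefix := ih ⟨f, rfl, rfl, fun i hi => hf i (by omega)⟩
    have hlast := (hf m (by omega)).sub_modEq hT hs1
    convert hprefix.add hlast using 1 <;> push_cast <;> ring

lemma exists_mem_Icc_sub_eq {ℓ : ℤ} (h₁ : -(n : ℤ) < ℓ) (h₂ : ℓ < n) :
    ∃ u ∈ Finset.Icc 1 n, ∃ v ∈ Finset.Icc 1 n, (v : ℤ) - u = ℓ := by
  simp only [Finset.mem_Icc]
  rcases le_or_gt 0 ℓ with hℓ | hℓ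
  · exact ⟨1, by omega, ℓ.toNat + 1, by omega, by omega⟩
  · exact ⟨(-ℓ).toNat + 1, by omega, 1, by omega, by omega⟩

lemma Pset_of_Rset (hT : T.Nonempty) {s1 i : ℕ} (hs1 : s1 ∈ S) {ℓ : ℤ}
    (h : Rset n S T i ℓ) : Pset n (sumGcd S T) s1 i ℓ := by
  obtain ⟨h₁, h₂, hwalk⟩ := h
  obtain ⟨u, hu, v, hv, rfl⟩ := exists_mem_Icc_sub_eq h₁ h₂
  exact ⟨h₁, h₂, (hwalk u hu v hv rfl).sub_modEq hT hs1⟩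

end Toeplitz

theorem stmt12_general (n : ℕ) (S T : Finset ℕ) (hS : S.Nonempty) (hT : T.Nonempty) :
    walkEnsured n S T (S.min' hS) ↔
      ∃ M : ℕ, 0 < M ∧ ∀ i : ℕ, M ≤ i →
        ∀ ℓ : ℤ, (Pset n (sumGcd S T) (S.min' hS) i ℓ ↔ Rset n S T i ℓ) := by
  have hs1 : S.min' hS ∈ S := S.min'_mem hS
  constructor
  · rintro ⟨M, hM, hwalk⟩
    refine ⟨M, hM, fun i hi ℓ => ⟨?_, Pset_of_Rset hT hs1⟩⟩
    rintro ⟨h₁, h₂, hmod⟩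
    exact ⟨h₁, h₂, fun u hu v hv huv => hwalk u hu v hv i hi (huv ▸ hmod)⟩
  · rintro ⟨M, hM, hPR⟩
    refine ⟨M, hM, fun u hu v hv ℓ hℓ hmod => ?_⟩
    have hP : Pset n (sumGcd S T) (S.min' hS) ℓ ((v : ℤ) - u) := by
      simp only [Finset.mem_Icc] at hu hv
      exact ⟨by omega, by omega, hmod⟩
    exact ((hPR ℓ hℓ _).1 hP).2.2 u hu v hv rfl

theorem stmt12 (n : ℕ) (S T : Finset ℕ) (hS : S.Nonempty) (hT : T.Nonempty)
    (hSsub : S ⊆ Finset.Icc 1 (n - 1)) (hTsub : T ⊆ Finset.Icc 1 (n - 1)) :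
    walkEnsured n S T (S.min' hS) ↔
      ∃ M : ℕ, 0 < M ∧ ∀ i : ℕ, M ≤ i →
        ∀ ℓ : ℤ, (Pset n (sumGcd S T) (S.min' hS) i ℓ ↔ Rset n S T i ℓ) :=
  stmt12_general n S T hS hT
end

section
/- Let n be a positive integer and let s, t ∈ {1,…,n−1} with s + t ≤ n and gcd(s, t) = 1. Then for any S, T ⊆ {1,…,n−1} with s ∈ S and t ∈ T, the Toeplitz matrix T_n⟨S; T⟩ has matrix period gcd{s'+t' : s'∈S, t'∈T} / gcd(S ∪ T), and in particular if additionally gcd(S+T) = 1 then T_n⟨S; T⟩ has some power equal to the all-ones matrix (eventually A^m = J). -/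
/-!
Every arc moves a vertex by `s' ≡ s` or by `-t' ≡ s` modulo `d = gcd(S+T)`, so a walk of length
`ℓ` from `u` to `v` forces `v ≡ u + ℓ s (mod d)`. Conversely, on `{1, …, s+t}` the arcs `+s` and
`-t` realise the rotation `x ↦ x + s (mod s+t)`, which is transitive since `gcd(s, s+t) = 1`; so
any two vertices are joined by a walk of every long length `ℓ` with `v ≡ u + ℓ s (mod s+t)`.
Closing up single arcs with such walks gives closed walks whose lengths `ℓ` realise the classes
`ℓ s ≡ s - s'` and `ℓ s ≡ s + t'`, hence, by Bézout, a closed walk with `ℓ s ≡ d (mod s+t)`.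
Inserting copies of it refines the congruence from modulus `s+t` to `d`, so for long lengths the
walks are exactly described by `v ≡ u + ℓ s (mod d)`. As `gcd(d, s) = 1` and `gcd(S ∪ T) = 1`,
the period is `d`.
-/

open Finset

section Walks

variable {n : ℕ} {S T : Finset ℕ} {u v w a b m : ℕ}

lemma hasWalk_zero_iff : hasWalk n S T u v 0 ↔ u = v := by
  constructor
  · rintro ⟨f, rfl, rfl, -⟩
    rfl
  · rintro rfl
    exact ⟨fun _ => u, rfl, rfl, fun _ h => absurd h (Nat.not_lt_zero _)⟩

lemma hasWalk_succ_iff :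
    hasWalk n S T u v (m + 1) ↔ ∃ w, hasWalk n S T u w m ∧ arc n S T w v := by
  constructor
  · rintro ⟨f, hf0, hfm, hf⟩
    exact ⟨f m, ⟨f, hf0, rfl, fun i hi => hf i (by omega)⟩, hfm ▸ hf m (by omega)⟩
  · rintro ⟨w, ⟨f, hf0, hfm, hf⟩, hwv⟩
    refine ⟨fun i => if i ≤ m then f i else v, by simpa using hf0, by simp, fun i hi => ?_⟩
    rcases Nat.lt_or_ge i m with him | him
    · simpa [him.le, Nat.succ_le_of_lt him] using hf i him
    · obtain rfl : i = m := by omega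
      simpa [hfm] using hwv

lemma hasWalk_one_iff : hasWalk n S T u v 1 ↔ arc n S T u v := by
  simp [hasWalk_succ_iff, hasWalk_zero_iff]

lemma hasWalk.trans (h₁ : hasWalk n S T u v a) (h₂ : hasWalk n S T v w b) :
    hasWalk n S T u w (a + b) := by
  induction b generalizing w with
  | zero => rwa [← hasWalk_zero_iff.1 h₂]
  | succ b ih =>
    obtain ⟨x, hvx, hxw⟩ := hasWalk_succ_iff.1 h₂
    exact hasWalk_succ_iff.2 ⟨x, ih hvx, hxw⟩

lemma hasWalk.cons (h : arc n S T u v) (hw : hasWalk n S T v w m) :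
    hasWalk n S T u w (m + 1) := by
  simpa [add_comm] using (hasWalk_one_iff.2 h).trans hw

lemma hasWalk.mul (h : hasWalk n S T u u a) (k : ℕ) : hasWalk n S T u u (k * a) := by
  induction k with
  | zero => simpa using hasWalk_zero_iff.2 rfl
  | succ k ih => simpa [Nat.succ_mul] using ih.trans h

lemma hasWalk.mem_Icc (h : hasWalk n S T u v m) (hm : m ≠ 0) :
    u ∈ Icc 1 n ∧ v ∈ Icc 1 n := by
  obtain ⟨f, rfl, rfl, hf⟩ := h
  obtain ⟨m, rfl⟩ := Nat.exists_eq_succ_of_ne_zero hm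
  exact ⟨(hf 0 (by omega)).1, (hf m (by omega)).2.1⟩

end Walks

section Invariant

variable {n : ℕ} {S T : Finset ℕ} {s t u v m : ℕ}

lemma sumGcd_dvd_add_s19 {a b : ℕ} (ha : a ∈ S) (hb : b ∈ T) : sumGcd S T ∣ a + b :=
  Finset.gcd_dvd (b := (a, b)) (mem_product.2 ⟨ha, hb⟩)

lemma arc.natCast_add_eq (hs : s ∈ S) (ht : t ∈ T) (h : arc n S T u v) :
    (u : ZMod (sumGcd S T)) + s = v := by
  have hsum {a b : ℕ} (ha : a ∈ S) (hb : b ∈ T) : (a : ZMod (sumGcd S T)) + b = 0 := by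
    exact_mod_cast (ZMod.natCast_eq_zero_iff _ _).2 (sumGcd_dvd_add_s19 ha hb)
  rcases h.2.2 with ⟨s', hs', huv⟩ | ⟨t', ht', huv⟩
  · have := congrArg (Int.cast : ℤ → ZMod (sumGcd S T)) huv
    push_cast at this
    linear_combination -this + hsum hs ht - hsum hs' ht
  · have := congrArg (Int.cast : ℤ → ZMod (sumGcd S T)) huv
    push_cast at this
    linear_combination this + hsum hs ht'

lemma hasWalk.natCast_add_mul_eq (hs : s ∈ S) (ht : t ∈ T) (h : hasWalk n S T u v m) :
    (u : ZMod (sumGcd S T)) + m * s = v := by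
  induction m generalizing v with
  | zero => simp [hasWalk_zero_iff.1 h]
  | succ m ih =>
    obtain ⟨w, huw, hwv⟩ := hasWalk_succ_iff.1 h
    push_cast
    linear_combination ih huw + hwv.natCast_add_eq hs ht

end Invariant

lemma eq_of_natCast_eq_of_mem_Icc {k x y : ℕ} (hx : x ∈ Icc 1 k) (hy : y ∈ Icc 1 k)
    (h : (x : ZMod k) = y) : x = y := by
  rw [mem_Icc] at hx hy
  exact ((ZMod.natCast_eq_natCast_iff _ _ _).1 h).eq_of_abs_lt (by rw [abs_lt]; omega)

lemma exists_natCast_mul_eq {k s : ℕ} [NeZero k] (hs : s.Coprime k) (τ : ZMod k) (B : ℕ) :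
    ∃ ℓ, B ≤ ℓ ∧ ℓ < B + k ∧ (ℓ : ZMod k) * s = τ := by
  set e : ZMod k := (τ - B * s) * (s : ZMod k)⁻¹
  refine ⟨B + e.val, by omega, by have := ZMod.val_lt e; omega, ?_⟩
  push_cast
  rw [ZMod.natCast_zmod_val]
  linear_combination (τ - B * s) * ZMod.coe_mul_inv_eq_one s hs

lemma exists_lt_natCast_mul_eq {k d : ℕ} [NeZero k] {x : ℤ} (hx : (d : ℤ) ∣ x) :
    ∃ c < k, (c : ZMod k) * d = x := by
  obtain ⟨y, rfl⟩ := hx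
  exact ⟨(y : ZMod k).val, ZMod.val_lt _, by push_cast; rw [ZMod.natCast_zmod_val]; ring⟩

section Cycle

variable {n : ℕ} {S T : Finset ℕ} {s t u v ℓ : ℕ}

lemma exists_arc_natCast_add_eq (hs : s ∈ S) (ht : t ∈ T) (hn : s + t ≤ n) {y : ℕ}
    (hy : y ∈ Icc 1 (s + t)) :
    ∃ x ∈ Icc 1 (s + t), arc n S T x y ∧ (x : ZMod (s + t)) + s = y := by
  rw [mem_Icc] at hy
  by_cases hsy : s < y
  · refine ⟨y - s, by rw [mem_Icc]; omega,
      ⟨by rw [mem_Icc]; omega, by rw [mem_Icc]; omega, .inl ⟨s, hs, by omega⟩⟩, ?_⟩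
    rw [Nat.cast_sub hsy.le]
    ring
  · refine ⟨y + t, by rw [mem_Icc]; omega,
      ⟨by rw [mem_Icc]; omega, by rw [mem_Icc]; omega, .inr ⟨t, ht, by push_cast; ring⟩⟩, ?_⟩
    have := ZMod.natCast_self (s + t)
    push_cast at this ⊢
    linear_combination this

lemma hasWalk_of_mem_cycle (hs : s ∈ S) (ht : t ∈ T) (hn : s + t ≤ n)
    (hu : u ∈ Icc 1 (s + t)) (hv : v ∈ Icc 1 (s + t)) (h : (u : ZMod (s + t)) + ℓ * s = v) :
    hasWalk n S T u v ℓ := by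
  induction ℓ generalizing v with
  | zero => exact hasWalk_zero_iff.2 (eq_of_natCast_eq_of_mem_Icc hu hv (by simpa using h))
  | succ ℓ ih =>
    obtain ⟨w, hw, hwv, hcast⟩ := exists_arc_natCast_add_eq hs ht hn hv
    push_cast at h
    exact hasWalk_succ_iff.2 ⟨w, ih hw (by linear_combination h - hcast), hwv⟩

lemma exists_hasWalk_to_cycle (ht : t ∈ T) (ht0 : 0 < t) (hu : u ∈ Icc 1 n) :
    ∃ a < u, ∃ u₀ ∈ Icc 1 (s + t), hasWalk n S T u u₀ a ∧ (u : ZMod (s + t)) + a * s = u₀ := by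
  induction u using Nat.strong_induction_on with
  | _ u ih =>
  rw [mem_Icc] at hu
  by_cases hut : u ≤ s + t
  · exact ⟨0, by omega, u, by rw [mem_Icc]; omega, hasWalk_zero_iff.2 rfl, by simp⟩
  · obtain ⟨a, ha, u₀, hu₀, hw, hcast⟩ := ih (u - t) (by omega) (by rw [mem_Icc]; omega)
    have harc : arc n S T u (u - t) :=
      ⟨by rw [mem_Icc]; omega, by rw [mem_Icc]; omega, .inr ⟨t, ht, by omega⟩⟩
    refine ⟨a + 1, by omega, u₀, hu₀, hasWalk.cons harc hw, ?_⟩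
    have := ZMod.natCast_self (s + t)
    rw [Nat.cast_sub (by omega)] at hcast
    push_cast at this ⊢
    linear_combination hcast + this

lemma exists_hasWalk_from_cycle (hs : s ∈ S) (hs0 : 0 < s) (hv : v ∈ Icc 1 n) :
    ∃ b < v, ∃ v₀ ∈ Icc 1 (s + t), hasWalk n S T v₀ v b ∧ (v₀ : ZMod (s + t)) + b * s = v := by
  induction v using Nat.strong_induction_on with
  | _ v ih =>
  rw [mem_Icc] at hv
  by_cases hvt : v ≤ s + t
  · exact ⟨0, by omega, v, by rw [mem_Icc]; omega, hasWalk_zero_iff.2 rfl, by simp⟩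
  · obtain ⟨b, hb, v₀, hv₀, hw, hcast⟩ := ih (v - s) (by omega) (by rw [mem_Icc]; omega)
    have harc : arc n S T (v - s) v :=
      ⟨by rw [mem_Icc]; omega, by rw [mem_Icc]; omega, .inl ⟨s, hs, by omega⟩⟩
    refine ⟨b + 1, by omega, v₀, hv₀, hasWalk_succ_iff.2 ⟨v - s, hw, harc⟩, ?_⟩
    rw [Nat.cast_sub (by omega)] at hcast
    push_cast
    linear_combination hcast

lemma hasWalk_of_natCast_add_mul_eq (hs : s ∈ S) (ht : t ∈ T) (hs0 : 0 < s) (ht0 : 0 < t)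
    (hn : s + t ≤ n) (hu : u ∈ Icc 1 n) (hv : v ∈ Icc 1 n) (hℓ : 2 * n ≤ ℓ)
    (h : (u : ZMod (s + t)) + ℓ * s = v) : hasWalk n S T u v ℓ := by
  obtain ⟨a, hau, u₀, hu₀, hwu, hcu⟩ := exists_hasWalk_to_cycle (S := S) (s := s) ht ht0 hu
  obtain ⟨b, hbv, v₀, hv₀, hwv, hcv⟩ := exists_hasWalk_from_cycle (T := T) (t := t) hs hs0 hv
  obtain ⟨L, rfl⟩ : ∃ L, ℓ = a + L + b := ⟨ℓ - a - b, by rw [mem_Icc] at hu hv; omega⟩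
  refine (hwu.trans (hasWalk_of_mem_cycle hs ht hn hu₀ hv₀ ?_)).trans hwv
  push_cast at h
  linear_combination h - hcu - hcv

lemma exists_hasWalk_natCast_mul_eq (hs : s ∈ S) (ht : t ∈ T) (hs0 : 0 < s) (ht0 : 0 < t)
    (hn : s + t ≤ n) (hst : s.Coprime t) (hu : u ∈ Icc 1 n) (hv : v ∈ Icc 1 n) :
    ∃ ℓ < 2 * n + (s + t), hasWalk n S T u v ℓ ∧ (ℓ : ZMod (s + t)) * s = v - u := by
  have : NeZero (s + t) := ⟨by omega⟩
  obtain ⟨ℓ, hBℓ, hℓB, hℓ⟩ :=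
    exists_natCast_mul_eq (Nat.coprime_self_add_right.2 hst) (v - u) (2 * n)
  exact ⟨ℓ, hℓB, hasWalk_of_natCast_add_mul_eq hs ht hs0 ht0 hn hu hv hBℓ (by rw [hℓ]; ring), hℓ⟩

end Cycle

lemma ZMod.mul_mem_addSubmonoid {k : ℕ} [NeZero k] (A : AddSubmonoid (ZMod k)) (c : ZMod k)
    {x : ZMod k} (hx : x ∈ A) : c * x ∈ A := by
  simpa [nsmul_eq_mul, ZMod.natCast_zmod_val] using A.nsmul_mem hx c.val

lemma ZMod.natCast_finset_gcd_mem_addSubmonoid {k : ℕ} [NeZero k] {ι : Type*}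
    (A : AddSubmonoid (ZMod k)) (F : Finset ι) (f : ι → ℕ) (hF : ∀ i ∈ F, (f i : ZMod k) ∈ A) :
    ((F.gcd f : ℕ) : ZMod k) ∈ A := by
  classical
  induction F using Finset.induction_on with
  | empty => simp
  | insert i F hi ih =>
    have hbezout : ((Nat.gcd (f i) (F.gcd f) : ℕ) : ZMod k) =
        ((f i).gcdA (F.gcd f) : ZMod k) * (f i : ℕ) +
          ((f i).gcdB (F.gcd f) : ZMod k) * (F.gcd f : ℕ) := by
      rw [← Int.cast_natCast, Nat.gcd_eq_gcd_ab]
      push_cast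
      ring
    rw [Finset.gcd_insert]
    change ((Nat.gcd (f i) (F.gcd f) : ℕ) : ZMod k) ∈ A
    rw [hbezout]
    exact add_mem (mul_mem_addSubmonoid A _ (hF i (mem_insert_self i F)))
      (mul_mem_addSubmonoid A _ (ih fun j hj => hF j (mem_insert_of_mem hj)))

/-- A closed walk of length `ℓ` at `1` is recorded by `ℓ s` rather than `ℓ`: as in
`hasWalk_of_natCast_add_mul_eq`, this is the rotation of the cycle `{1, …, s+t}` it performs. -/
def closedWalkResidues (n : ℕ) (S T : Finset ℕ) (s t : ℕ) : AddSubmonoid (ZMod (s + t)) where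
  carrier := {τ | ∃ ℓ, hasWalk n S T 1 1 ℓ ∧ (ℓ : ZMod (s + t)) * s = τ}
  add_mem' := by
    rintro _ _ ⟨a, ha, rfl⟩ ⟨b, hb, rfl⟩
    exact ⟨a + b, ha.trans hb, by push_cast; ring⟩
  zero_mem' := ⟨0, hasWalk_zero_iff.2 rfl, by simp⟩

section Residues

variable {n : ℕ} {S T : Finset ℕ} {s t x y : ℕ}

lemma arc.add_sub_mem_closedWalkResidues (hs : s ∈ S) (ht : t ∈ T) (hs0 : 0 < s) (ht0 : 0 < t)
    (hn : s + t ≤ n) (hst : s.Coprime t) (h : arc n S T x y) :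
    (s + x - y : ZMod (s + t)) ∈ closedWalkResidues n S T s t := by
  have h1 : 1 ∈ Icc 1 n := by rw [mem_Icc]; omega
  obtain ⟨μ, -, hw₁, hμ⟩ := exists_hasWalk_natCast_mul_eq hs ht hs0 ht0 hn hst h1 h.1
  obtain ⟨ν, -, hw₂, hν⟩ := exists_hasWalk_natCast_mul_eq hs ht hs0 ht0 hn hst h.2.1 h1
  exact ⟨μ + (ν + 1), hw₁.trans (hasWalk.cons h hw₂), by push_cast; linear_combination hμ + hν⟩

lemma natCast_sumGcd_mem_closedWalkResidues (hSsub : S ⊆ Icc 1 (n - 1))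
    (hTsub : T ⊆ Icc 1 (n - 1)) (hs : s ∈ S) (ht : t ∈ T) (hs0 : 0 < s) (ht0 : 0 < t)
    (hn : s + t ≤ n) (hst : s.Coprime t) :
    (sumGcd S T : ZMod (s + t)) ∈ closedWalkResidues n S T s t := by
  have : NeZero (s + t) := ⟨by omega⟩
  refine ZMod.natCast_finset_gcd_mem_addSubmonoid _ _ _ fun p hp => ?_
  obtain ⟨hp₁, hp₂⟩ := mem_product.1 hp
  have hp₁n := mem_Icc.1 (hSsub hp₁)
  have hp₂n := mem_Icc.1 (hTsub hp₂)
  have h₁ := arc.add_sub_mem_closedWalkResidues hs ht hs0 ht0 hn hst (x := 1) (y := 1 + p.1)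
    ⟨by rw [mem_Icc]; omega, by rw [mem_Icc]; omega, .inl ⟨p.1, hp₁, by push_cast; ring⟩⟩
  have h₂ := arc.add_sub_mem_closedWalkResidues hs ht hs0 ht0 hn hst (x := 1 + p.2) (y := 1)
    ⟨by rw [mem_Icc]; omega, by rw [mem_Icc]; omega, .inr ⟨p.2, hp₂, by push_cast; ring⟩⟩
  convert add_mem h₂ (ZMod.mul_mem_addSubmonoid _ (-1) h₁) using 1
  push_cast
  ring

end Residues

section LongWalks

variable {n : ℕ} {S T : Finset ℕ} {s t : ℕ}

theorem exists_forall_ge_hasWalk (hSsub : S ⊆ Icc 1 (n - 1)) (hTsub : T ⊆ Icc 1 (n - 1))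
    (hs : s ∈ S) (ht : t ∈ T) (hn : s + t ≤ n) (hst : s.Coprime t) :
    ∃ M, ∀ ℓ : ℕ, M ≤ ℓ → ∀ u ∈ Icc 1 n, ∀ v ∈ Icc 1 n,
      (u : ZMod (sumGcd S T)) + ℓ * s = v → hasWalk n S T u v ℓ := by
  have hs0 : 0 < s := (mem_Icc.1 (hSsub hs)).1
  have ht0 : 0 < t := (mem_Icc.1 (hTsub ht)).1
  have : NeZero (s + t) := ⟨by omega⟩
  have h1 : 1 ∈ Icc 1 n := by rw [mem_Icc]; omega
  obtain ⟨Λ, hΛ, hΛs⟩ :=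
    natCast_sumGcd_mem_closedWalkResidues hSsub hTsub hs ht hs0 ht0 hn hst
  refine ⟨4 * n + (s + t) * (Λ + 1), fun ℓ hℓ u hu v hv h => ?_⟩
  -- Walk `u → 1`, then `k < s + t` loops of length `Λ`, each adding `sumGcd S T` to the class
  -- of the length mod `s + t`, then a walk `1 → v` of the remaining length `≥ 2n`.
  obtain ⟨L, hL, hwL, hLs⟩ := exists_hasWalk_natCast_mul_eq hs ht hs0 ht0 hn hst hu h1
  obtain ⟨k, hk, hks⟩ := exists_lt_natCast_mul_eq (k := s + t) (x := (ℓ : ℤ) * s - (v - u))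
    ((ZMod.intCast_zmod_eq_zero_iff_dvd _ _).1 (by push_cast; linear_combination h))
  have hkΛ : k * Λ ≤ (s + t) * Λ := Nat.mul_le_mul_right Λ hk.le
  obtain ⟨L', rfl⟩ : ∃ L', ℓ = L + (k * Λ + L') := ⟨ℓ - L - k * Λ, by rw [mul_add] at hℓ; omega⟩
  refine hwL.trans ((hΛ.mul k).trans
    (hasWalk_of_natCast_add_mul_eq hs ht hs0 ht0 hn h1 hv (by rw [mul_add] at hℓ; omega) ?_))
  push_cast at hks
  linear_combination -hks - hLs - k * hΛs

theorem exists_forall_ge_hasWalk_iff (hSsub : S ⊆ Icc 1 (n - 1)) (hTsub : T ⊆ Icc 1 (n - 1))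
    (hs : s ∈ S) (ht : t ∈ T) (hn : s + t ≤ n) (hst : s.Coprime t) :
    ∃ M, ∀ ℓ : ℕ, M ≤ ℓ → ∀ u v, hasWalk n S T u v ℓ ↔
      u ∈ Icc 1 n ∧ v ∈ Icc 1 n ∧ (u : ZMod (sumGcd S T)) + ℓ * s = v := by
  obtain ⟨M, hM⟩ := exists_forall_ge_hasWalk hSsub hTsub hs ht hn hst
  refine ⟨M + 1, fun ℓ hℓ u v => ⟨fun h => ?_, fun ⟨hu, hv, h⟩ => hM ℓ (by omega) u hu v hv h⟩⟩
  obtain ⟨hu, hv⟩ := h.mem_Icc (by omega)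
  exact ⟨hu, hv, h.natCast_add_mul_eq hs ht⟩

lemma unionGcd_eq_one (hs : s ∈ S) (ht : t ∈ T) (hst : s.Coprime t) : unionGcd S T = 1 :=
  Nat.dvd_one.1 <| hst ▸
    Nat.dvd_gcd (Finset.gcd_dvd (mem_union_left T hs)) (Finset.gcd_dvd (mem_union_right S ht))

lemma coprime_sumGcd (hs : s ∈ S) (ht : t ∈ T) (hst : s.Coprime t) : (sumGcd S T).Coprime s :=
  (Nat.coprime_self_add_left.2 hst.symm).coprime_dvd_left (sumGcd_dvd_add_s19 hs ht)

lemma sumGcd_pos (hs : s ∈ S) (ht : t ∈ T) (hst : s.Coprime t) : 0 < sumGcd S T :=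
  Nat.pos_of_dvd_of_pos (sumGcd_dvd_add_s19 hs ht) (Nat.pos_of_ne_zero fun h => by simp_all)

lemma sumGcd_dvd_of_forall_ge_hasWalk_iff {M Mq q : ℕ} (hs : s ∈ S) (ht : t ∈ T)
    (hst : s.Coprime t) (hn : 0 < n)
    (hM : ∀ ℓ : ℕ, M ≤ ℓ → ∀ u v, hasWalk n S T u v ℓ ↔
      u ∈ Icc 1 n ∧ v ∈ Icc 1 n ∧ (u : ZMod (sumGcd S T)) + ℓ * s = v)
    (hq : ∀ m : ℕ, Mq ≤ m → ∀ u v, hasWalk n S T u v m ↔ hasWalk n S T u v (m + q)) :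
    sumGcd S T ∣ q := by
  have h1 : 1 ∈ Icc 1 n := by rw [mem_Icc]; omega
  set m := sumGcd S T * (M + Mq)
  have hm : M + Mq ≤ m := Nat.le_mul_of_pos_left _ (sumGcd_pos hs ht hst)
  have hw := (hM m (by omega) 1 1).2 ⟨h1, h1, by simp [m]⟩
  have hwq := ((hM _ (by omega) 1 1).1 ((hq m (by omega) 1 1).1 hw)).2.2
  refine (coprime_sumGcd hs ht hst).dvd_of_dvd_mul_right ((ZMod.natCast_eq_zero_iff _ _).1 ?_)
  push_cast [m, ZMod.natCast_self] at hwq ⊢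
  linear_combination hwq

end LongWalks

theorem stmt19 (n : ℕ) (S T : Finset ℕ)
    (hSsub : S ⊆ Finset.Icc 1 (n - 1)) (hTsub : T ⊆ Finset.Icc 1 (n - 1))
    (s t : ℕ) (hsS : s ∈ S) (htT : t ∈ T)
    (hst : s + t ≤ n) (hcop : Nat.gcd s t = 1) :
    IsLeast {p : ℕ | 0 < p ∧ ∃ M : ℕ, ∀ m : ℕ, M ≤ m → ∀ u v : ℕ,
        (hasWalk n S T u v m ↔ hasWalk n S T u v (m + p))}
      (sumGcd S T / unionGcd S T) ∧
    (sumGcd S T = 1 → ∃ M : ℕ, ∀ m : ℕ, M ≤ m →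
      ∀ u ∈ Finset.Icc 1 n, ∀ v ∈ Finset.Icc 1 n, hasWalk n S T u v m) := by
  have hn : 0 < n := by have := mem_Icc.1 (hSsub hsS); omega
  obtain ⟨M, hM⟩ := exists_forall_ge_hasWalk_iff hSsub hTsub hsS htT hst hcop
  rw [unionGcd_eq_one hsS htT hcop, Nat.div_one]
  refine ⟨⟨⟨sumGcd_pos hsS htT hcop, M, fun m hm u v => ?_⟩,
    fun q ⟨hq, Mq, hMq⟩ => Nat.le_of_dvd hq
      (sumGcd_dvd_of_forall_ge_hasWalk_iff hsS htT hcop hn hM hMq)⟩,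
    fun hd => ⟨M, fun m hm u hu v hv => (hM m hm u v).2 ⟨hu, hv, ?_⟩⟩⟩
  · rw [hM m hm, hM _ (by omega)]
    push_cast
    rw [ZMod.natCast_self, add_zero]
  · have : Subsingleton (ZMod (sumGcd S T)) := by rw [hd]; infer_instance
    exact Subsingleton.elim _ _
end
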